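/- (Lemma 1, blindness of a single Dango state.) Let ρ_Z : ZMod 8 → Matrix (Fin 16) (Fin 16) ℂ, ρ_Z(k) = |D_Z(kπ/4)⟩⟨D_Z(kπ/4)|. For every POVM Π : Fin m → Matrix (Fin 16) (Fin 16) ℂ, every θ, φ : ZMod 8 and every j : Fin m such that the denominator below is nonzero, the posterior probability of Alice's computational angle is uniform: [Σ_{r : ZMod 2} Tr(Π j · ρ_Z(φ − θ − 4·r))] / [Σ_{θ' : ZMod 8} Σ_{r : ZMod 2} Tr(Π j · ρ_Z(φ − θ' − 4·r))] = 1/8, where 4·r denotes the image of r under the map ZMod 2 → ZMod 8 sending 0↦0, 1↦4. -/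
import Mathlib


open Matrix Complex
open scoped ComplexConjugate ComplexOrder

noncomputable section

/-- index type of the four-qubit space `(ℂ²)^{⊗4}` -/
abbrev Q4 : Type := Fin 2 × Fin 2 × Fin 2 × Fin 2

/-- Bell state `η₁ = (|00⟩+|11⟩)/√2` -/
def bell1 : Fin 2 × Fin 2 → ℂ := fun p =>
  if p = ((0 : Fin 2), (0 : Fin 2)) then ((1 / Real.sqrt 2 : ℝ) : ℂ)
  else if p = (1, 1) then ((1 / Real.sqrt 2 : ℝ) : ℂ) else 0

/-- Bell state `η₂ = (|00⟩−|11⟩)/√2` -/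
def bell2 : Fin 2 × Fin 2 → ℂ := fun p =>
  if p = ((0 : Fin 2), (0 : Fin 2)) then ((1 / Real.sqrt 2 : ℝ) : ℂ)
  else if p = (1, 1) then -((1 / Real.sqrt 2 : ℝ) : ℂ) else 0

/-- Bell state `η₃ = (|10⟩+|01⟩)/√2` -/
def bell3 : Fin 2 × Fin 2 → ℂ := fun p =>
  if p = ((1 : Fin 2), (0 : Fin 2)) then ((1 / Real.sqrt 2 : ℝ) : ℂ)
  else if p = (0, 1) then ((1 / Real.sqrt 2 : ℝ) : ℂ) else 0

/-- Bell state `η₄ = (|10⟩−|01⟩)/√2` -/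
def bell4 : Fin 2 × Fin 2 → ℂ := fun p =>
  if p = ((1 : Fin 2), (0 : Fin 2)) then ((1 / Real.sqrt 2 : ℝ) : ℂ)
  else if p = (0, 1) then -((1 / Real.sqrt 2 : ℝ) : ℂ) else 0

/-- outer product `|v⟩⟨w|` -/
def outer {n : Type*} (v w : n → ℂ) : Matrix n n ℂ :=
  Matrix.of fun i j => v i * conj (w j)

/-- the two-qubit phase gate `T_Z(ξ)`: `|00⟩↦|00⟩`, `|01⟩↦e^{iξ}|01⟩`, `|10⟩↦|10⟩`, `|11⟩↦|11⟩` -/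
def TZ (ξ : ℝ) : Matrix (Fin 2 × Fin 2) (Fin 2 × Fin 2) ℂ :=
  Matrix.diagonal fun p =>
    if p = ((0 : Fin 2), (1 : Fin 2)) then Complex.exp (Complex.I * ξ) else 1

/-- the two-qubit gate `T_X(ξ)` -/
def TX (ξ : ℝ) : Matrix (Fin 2 × Fin 2) (Fin 2 × Fin 2) ℂ :=
  ((1 + Complex.exp (Complex.I * ξ)) / 2) • (outer bell2 bell2 + outer bell4 bell4)
    + ((1 - Complex.exp (Complex.I * ξ)) / 2) • (outer bell2 bell4 + outer bell4 bell2)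
    + outer bell1 bell1 + outer bell3 bell3

/-- `I₂ ⊗ T ⊗ I₂`, the middle operator acting on qubits 2,3 of qubits 1,2,3,4 -/
def mid (T : Matrix (Fin 2 × Fin 2) (Fin 2 × Fin 2) ℂ) : Matrix Q4 Q4 ℂ :=
  Matrix.of fun a b =>
    (if a.1 = b.1 then (1 : ℂ) else 0) * T (a.2.1, a.2.2.1) (b.2.1, b.2.2.1) *
      (if a.2.2.2 = b.2.2.2 then 1 else 0)

/-- `|η₁⟩ ⊗ |η₁⟩`, the first Bell pair on qubits 1,2 and the second on qubits 3,4 -/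
def bellPair : Q4 → ℂ := fun a => bell1 (a.1, a.2.1) * bell1 (a.2.2.1, a.2.2.2)

/-- the filtering operator `Π = I₂ ⊗ (I₄ − |η₁⟩⟨η₁|) ⊗ I₂` -/
def filterOp : Matrix Q4 Q4 ℂ := mid (1 - outer bell1 bell1)

/-- the Z-Dango vector `D_Z(ξ)` -/
def DZ (ξ : ℝ) : Q4 → ℂ := filterOp.mulVec ((mid (TZ ξ)).mulVec bellPair)

/-- the X-Dango vector `D_X(ξ)` -/
def DX (ξ : ℝ) : Q4 → ℂ := filterOp.mulVec ((mid (TX ξ)).mulVec bellPair)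

/-- identification `(ℂ²)^{⊗4} ≅ ℂ^{16}` -/
def q4Equiv : Q4 ≃ Fin 16 :=
  ((Equiv.prodCongr (Equiv.refl (Fin 2))
        ((Equiv.prodCongr (Equiv.refl (Fin 2)) finProdFinEquiv).trans finProdFinEquiv)).trans
      finProdFinEquiv).trans (finCongr (by norm_num))

/-- the angle `kπ/4` encoded by `k : ZMod 8` -/
def angle (k : ZMod 8) : ℝ := (k.val : ℝ) * Real.pi / 4

/-- `D_Z(ξ)` as a vector in `ℂ^{16}` -/
def DZ16 (ξ : ℝ) : Fin 16 → ℂ := fun x => DZ ξ (q4Equiv.symm x)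

/-- `D_X(ξ)` as a vector in `ℂ^{16}` -/
def DX16 (ξ : ℝ) : Fin 16 → ℂ := fun x => DX ξ (q4Equiv.symm x)

/-- the Z-Dango projector family `ρ_Z(k) = |D_Z(kπ/4)⟩⟨D_Z(kπ/4)|` -/
def rhoZ (k : ZMod 8) : Matrix (Fin 16) (Fin 16) ℂ :=
  outer (DZ16 (angle k)) (DZ16 (angle k))

/-- the X-Dango projector family `ρ_X(k) = |D_X(kπ/4)⟩⟨D_X(kπ/4)|` -/
def rhoX (k : ZMod 8) : Matrix (Fin 16) (Fin 16) ℂ :=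
  outer (DX16 (angle k)) (DX16 (angle k))

/-- `4·r`: the map `ZMod 2 → ZMod 8` sending `0 ↦ 0`, `1 ↦ 4` -/
def pad (r : ZMod 2) : ZMod 8 := 4 * (r.val : ZMod 8)

end

noncomputable section Aux

/-- diagonal part of `TZ` that carries no phase -/
def Dzero : Matrix (Fin 2 × Fin 2) (Fin 2 × Fin 2) ℂ :=
  Matrix.diagonal fun p => if p = ((0 : Fin 2), (1 : Fin 2)) then 0 else 1

/-- diagonal part of `TZ` that carries the phase -/
def Done : Matrix (Fin 2 × Fin 2) (Fin 2 × Fin 2) ℂ :=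
  Matrix.diagonal fun p => if p = ((0 : Fin 2), (1 : Fin 2)) then 1 else 0

def Uv : Fin 16 → ℂ := fun x =>
  (filterOp.mulVec ((mid Dzero).mulVec bellPair)) (q4Equiv.symm x)

def Wv : Fin 16 → ℂ := fun x =>
  (filterOp.mulVec ((mid Done).mulVec bellPair)) (q4Equiv.symm x)

/-- the constant matrix `ρ_Z(k) + ρ_Z(k+4)` -/
def Smat : Matrix (Fin 16) (Fin 16) ℂ :=
  Matrix.of fun i j => 2 * (Uv i * conj (Uv j)) + 2 * (Wv i * conj (Wv j))

lemma mid_decomp (ξ : ℝ) :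
    mid (TZ ξ) = mid Dzero + Complex.exp (Complex.I * ξ) • mid Done := by
  ext a b
  simp only [mid, TZ, Dzero, Done, Matrix.add_apply, Matrix.smul_apply, Matrix.of_apply,
    Matrix.diagonal_apply, smul_eq_mul]
  split_ifs <;> ring

lemma DZ16_eq (ξ : ℝ) :
    DZ16 ξ = fun x => Uv x + Complex.exp (Complex.I * ξ) * Wv x := by
  funext x
  simp only [DZ16, DZ, Uv, Wv, mid_decomp ξ, Matrix.add_mulVec, Matrix.smul_mulVec,
    Matrix.mulVec_add, Matrix.mulVec_smul, Pi.add_apply, Pi.smul_apply, smul_eq_mul]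

lemma exp_shift (x : ℝ) :
    Complex.exp (Complex.I * ((x + Real.pi : ℝ) : ℂ)) = -Complex.exp (Complex.I * x) := by
  push_cast
  rw [show Complex.I * ((x : ℂ) + (Real.pi : ℂ)) = Complex.I * x + Real.pi * Complex.I from by
    ring, Complex.exp_add, Complex.exp_pi_mul_I]
  ring

lemma exp_angle_shift (k : ZMod 8) :
    Complex.exp (Complex.I * angle (k + 4)) = -Complex.exp (Complex.I * angle k) := by
  have h4 : ((4 : ZMod 8)).val = 4 := rfl
  have hv : (k + 4).val = (k.val + 4) % 8 := by rw [ZMod.val_add, h4]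
  have hk8 : k.val < 8 := ZMod.val_lt k
  by_cases h : k.val < 4
  · have hv' : (k + 4).val = k.val + 4 := by rw [hv]; exact Nat.mod_eq_of_lt (by omega)
    have : angle (k + 4) = angle k + Real.pi := by
      simp only [angle, hv']
      push_cast
      ring
    rw [this, exp_shift]
  · have hv' : k.val = (k + 4).val + 4 := by omega
    have : angle k = angle (k + 4) + Real.pi := by
      rw [angle, angle, hv']
      push_cast
      ring
    rw [this, exp_shift]
    ring

lemma exp_mul_conj (ξ : ℝ) :
    Complex.exp (Complex.I * ξ) * conj (Complex.exp (Complex.I * ξ)) = 1 := by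
  rw [← Complex.exp_conj, ← Complex.exp_add]
  have : Complex.I * ξ + conj (Complex.I * ξ) = 0 := by
    rw [_root_.map_mul, Complex.conj_ofReal, Complex.conj_I]
    ring
  rw [this, Complex.exp_zero]

lemma rho_pair (k : ZMod 8) : rhoZ k + rhoZ (k + 4) = Smat := by
  ext i j
  simp only [rhoZ, outer, Smat, Matrix.add_apply, Matrix.of_apply, DZ16_eq]
  rw [exp_angle_shift k]
  have hc := exp_mul_conj (angle k)
  simp only [_root_.map_add, _root_.map_mul, _root_.map_neg]
  linear_combination (2 * Wv i * conj (Wv j)) * hc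

lemma sum_pad (x : ZMod 8) : ∑ r : ZMod 2, rhoZ (x - pad r) = Smat := by
  have h2 : ∑ r : ZMod 2, rhoZ (x - pad r) = rhoZ (x - pad 0) + rhoZ (x - pad 1) :=
    Fin.sum_univ_two _
  have hp0 : pad 0 = 0 := by decide
  have hp1 : pad 1 = 4 := by decide
  rw [h2, hp0, hp1, sub_zero, sub_eq_add_neg, show (-4 : ZMod 8) = 4 from by decide]
  exact rho_pair x

end Aux

/-- **Lemma 1, blindness of a single Dango state.** For every POVM
`Pov : Fin m → Matrix (Fin 16) (Fin 16) ℂ`, every `θ φ : ZMod 8` and every outcome `j` whose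
denominator is nonzero, the Bayes posterior of Alice's computational angle is uniform:
`[Σ_r Tr(Pov j · ρ_Z(φ−θ−4r))] / [Σ_{θ'} Σ_r Tr(Pov j · ρ_Z(φ−θ'−4r))] = 1/8`. -/
theorem statement4 (m : ℕ) (Pov : Fin m → Matrix (Fin 16) (Fin 16) ℂ)
    (hpos : ∀ j, (Pov j).PosSemidef) (hsum : ∑ j, Pov j = 1)
    (θ φ : ZMod 8) (j : Fin m)
    (hden : (∑ θ' : ZMod 8, ∑ r : ZMod 2, (Pov j * rhoZ (φ - θ' - pad r)).trace) ≠ 0) :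
    (∑ r : ZMod 2, (Pov j * rhoZ (φ - θ - pad r)).trace) /
      (∑ θ' : ZMod 8, ∑ r : ZMod 2, (Pov j * rhoZ (φ - θ' - pad r)).trace) = 1 / 8 := by
  have hS : ∀ x : ZMod 8,
      ∑ r : ZMod 2, (Pov j * rhoZ (x - pad r)).trace = (Pov j * Smat).trace := by
    intro x
    rw [← Matrix.trace_sum, ← Matrix.mul_sum, sum_pad x]
  have hden8 : ∑ θ' : ZMod 8, ∑ r : ZMod 2, (Pov j * rhoZ (φ - θ' - pad r)).trace =
      8 * (Pov j * Smat).trace := by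
    simp only [fun θ' : ZMod 8 => hS (φ - θ')]
    simp [Finset.sum_const]
  have ht : (Pov j * Smat).trace ≠ 0 := by
    intro h
    apply hden
    rw [hden8, h, mul_zero]
  rw [hden8, hS (φ - θ)]
  field_simp
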